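/- arXiv:1507.03833 — 4 statements merged into one kernel-verified Lean document; each statement's English description precedes it below -/
import Mathlib

section
/- Fix τ ∈ (0,1) and κ > 0. The gradient of the smoothed loss, ∇Q̂_{τ,κ}(Γ) = −(mn)^{-1} Xᵀ [[(κmn)^{-1}(Y − XΓ)]]_τ, is Lipschitz continuous in Γ with Lipschitz constant M = (κ m² n²)^{-1}‖X‖²; that is, for all Γ₁, Γ₂ ∈ ℝ^{p×m}, ‖∇Q̂_{τ,κ}(Γ₁) − ∇Q̂_{τ,κ}(Γ₂)‖_F ≤ (κ m² n²)^{-1}‖X‖² ‖Γ₁ − Γ₂‖_F. -/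
open Matrix
open scoped BigOperators

noncomputable section

/-- Frobenius norm. -/
def froNorm {n m : ℕ} (A : Matrix (Fin n) (Fin m) ℝ) : ℝ :=
  Real.sqrt (∑ i, ∑ j, (A i j) ^ 2)

/-- Spectral (operator) norm. -/
def specNorm {n m : ℕ} (A : Matrix (Fin n) (Fin m) ℝ) : ℝ :=
  ‖LinearMap.toContinuousLinearMap (Matrix.toEuclideanLin A)‖

/-- Entrywise clipping [[A]]_τ of a matrix to [τ−1, τ]. -/
def clip (τ : ℝ) {n m : ℕ} (A : Matrix (Fin n) (Fin m) ℝ) : Matrix (Fin n) (Fin m) ℝ :=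
  Matrix.of fun i j => max (τ - 1) (min τ (A i j))

/-- The gradient ∇Q̂_{τ,κ}(Γ) = −(mn)⁻¹Xᵀ[[(κmn)⁻¹(Y − XΓ)]]_τ of the smoothed loss. -/
def gradQsmooth {n m p : ℕ} (τ κ : ℝ) (Y : Matrix (Fin n) (Fin m) ℝ)
    (X : Matrix (Fin n) (Fin p) ℝ) (Γ : Matrix (Fin p) (Fin m) ℝ) :
    Matrix (Fin p) (Fin m) ℝ :=
  (-(((m : ℝ) * n)⁻¹)) • (Xᵀ * clip τ ((((κ * m * n : ℝ))⁻¹) • (Y - X * Γ)))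

/-!
Clipping to `[τ - 1, τ]` is 1-Lipschitz entrywise, hence in Frobenius norm, and multiplying by
`X` or by `Xᵀ` scales Frobenius norms by at most `‖X‖`. So the difference of the two gradients is
bounded by `(mn)⁻¹ ‖X‖ · (κmn)⁻¹ ‖X‖ ‖Γ₁ - Γ₂‖_F`.
-/

theorem abs_max_min_sub_max_min_le {α : Type*} [AddCommGroup α] [LinearOrder α]
    [IsOrderedAddMonoid α] (a b x y : α) :
    |max a (min b x) - max a (min b y)| ≤ |x - y| :=
  calc |max a (min b x) - max a (min b y)| ≤ |min b x - min b y| := by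
        simpa only [max_comm a] using abs_max_sub_max_le_abs (min b x) (min b y) a
    _ ≤ max |b - b| |x - y| := abs_min_sub_min_le_max b x b y
    _ = |x - y| := by simp

section Norms

variable {n m p : ℕ}

lemma specNorm_nonneg (A : Matrix (Fin n) (Fin m) ℝ) : 0 ≤ specNorm A :=
  norm_nonneg _

lemma froNorm_le_froNorm_of_abs_le {A B : Matrix (Fin n) (Fin m) ℝ}
    (h : ∀ i j, |A i j| ≤ |B i j|) : froNorm A ≤ froNorm B :=
  Real.sqrt_le_sqrt <| Finset.sum_le_sum fun i _ =>
    Finset.sum_le_sum fun j _ => sq_le_sq.mpr (h i j)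

lemma froNorm_smul (c : ℝ) (A : Matrix (Fin n) (Fin m) ℝ) :
    froNorm (c • A) = |c| * froNorm A := by
  simp only [froNorm, Matrix.smul_apply, smul_eq_mul, mul_pow, ← Finset.mul_sum]
  rw [Real.sqrt_mul (sq_nonneg c), Real.sqrt_sq_eq_abs]

lemma froNorm_neg (A : Matrix (Fin n) (Fin m) ℝ) : froNorm (-A) = froNorm A := by
  simp [froNorm]

lemma froNorm_clip_sub_clip_le (τ : ℝ) (A B : Matrix (Fin n) (Fin m) ℝ) :
    froNorm (clip τ A - clip τ B) ≤ froNorm (A - B) :=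
  froNorm_le_froNorm_of_abs_le fun i j => abs_max_min_sub_max_min_le _ _ (A i j) (B i j)

lemma sum_sq_mulVec_le (A : Matrix (Fin n) (Fin p) ℝ) (v : Fin p → ℝ) :
    ∑ i, (A *ᵥ v) i ^ 2 ≤ specNorm A ^ 2 * ∑ i, v i ^ 2 := by
  have hnorm_sq {k : ℕ} (w : Fin k → ℝ) : ‖WithLp.toLp 2 w‖ ^ 2 = ∑ i, w i ^ 2 := by
    simp [EuclideanSpace.norm_sq_eq]
  have hA : ‖WithLp.toLp 2 (A *ᵥ v)‖ ≤ specNorm A * ‖WithLp.toLp 2 v‖ :=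
    (LinearMap.toContinuousLinearMap (toEuclideanLin A)).le_opNorm (WithLp.toLp 2 v)
  calc ∑ i, (A *ᵥ v) i ^ 2 = ‖WithLp.toLp 2 (A *ᵥ v)‖ ^ 2 := (hnorm_sq _).symm
    _ ≤ (specNorm A * ‖WithLp.toLp 2 v‖) ^ 2 := by gcongr
    _ = specNorm A ^ 2 * ∑ i, v i ^ 2 := by rw [mul_pow, hnorm_sq]

lemma froNorm_mul_le (A : Matrix (Fin n) (Fin p) ℝ) (B : Matrix (Fin p) (Fin m) ℝ) :
    froNorm (A * B) ≤ specNorm A * froNorm B := by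
  have hsq : ∑ i, ∑ j, (A * B) i j ^ 2 ≤ specNorm A ^ 2 * ∑ i, ∑ j, B i j ^ 2 :=
    calc ∑ i, ∑ j, (A * B) i j ^ 2 = ∑ j, ∑ i, (A *ᵥ fun k => B k j) i ^ 2 := Finset.sum_comm
      _ ≤ ∑ j, specNorm A ^ 2 * ∑ k, B k j ^ 2 := by
        gcongr with j
        exact sum_sq_mulVec_le A _
      _ = specNorm A ^ 2 * ∑ i, ∑ j, B i j ^ 2 := by rw [← Finset.mul_sum, Finset.sum_comm]
  calc froNorm (A * B) ≤ √(specNorm A ^ 2 * ∑ i, ∑ j, B i j ^ 2) := Real.sqrt_le_sqrt hsq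
    _ = specNorm A * froNorm B := by
      rw [Real.sqrt_mul (sq_nonneg _), Real.sqrt_sq (specNorm_nonneg A), froNorm]

lemma specNorm_transpose (A : Matrix (Fin n) (Fin p) ℝ) : specNorm Aᵀ = specNorm A := by
  rw [specNorm, ← conjTranspose_eq_transpose_of_trivial, toEuclideanLin_conjTranspose_eq_adjoint,
    LinearMap.adjoint_toContinuousLinearMap]
  exact LinearIsometryEquiv.norm_map ContinuousLinearMap.adjoint _

end Norms

theorem gradQsmooth_lipschitz_general {n m p : ℕ}
    (τ κ : ℝ) (hκ : 0 < κ)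
    (Y : Matrix (Fin n) (Fin m) ℝ) (X : Matrix (Fin n) (Fin p) ℝ) :
    ∀ Γ₁ Γ₂ : Matrix (Fin p) (Fin m) ℝ,
      froNorm (gradQsmooth τ κ Y X Γ₁ - gradQsmooth τ κ Y X Γ₂)
        ≤ (κ * (m : ℝ) ^ 2 * (n : ℝ) ^ 2)⁻¹ * (specNorm X) ^ 2 * froNorm (Γ₁ - Γ₂) := by
  intro Γ₁ Γ₂
  set c : ℝ := (κ * m * n)⁻¹
  set R₁ := c • (Y - X * Γ₁)
  set R₂ := c • (Y - X * Γ₂)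
  have hc : 0 ≤ c := by positivity
  have hR : R₁ - R₂ = -(c • (X * (Γ₁ - Γ₂))) := by
    rw [Matrix.mul_sub]
    module
  have hX := specNorm_nonneg X
  calc froNorm (gradQsmooth τ κ Y X Γ₁ - gradQsmooth τ κ Y X Γ₂)
      = ((m : ℝ) * n)⁻¹ * froNorm (Xᵀ * (clip τ R₁ - clip τ R₂)) := by
        rw [gradQsmooth, gradQsmooth, ← smul_sub, ← Matrix.mul_sub, froNorm_smul, abs_neg,
          abs_of_nonneg (by positivity)]
    _ ≤ ((m : ℝ) * n)⁻¹ * (specNorm X * froNorm (R₁ - R₂)) := by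
        grw [froNorm_mul_le, specNorm_transpose, froNorm_clip_sub_clip_le]
    _ ≤ ((m : ℝ) * n)⁻¹ * (specNorm X * (c * (specNorm X * froNorm (Γ₁ - Γ₂)))) := by
        rw [hR, froNorm_neg, froNorm_smul, abs_of_nonneg hc]
        grw [froNorm_mul_le]
    _ = (κ * (m : ℝ) ^ 2 * (n : ℝ) ^ 2)⁻¹ * specNorm X ^ 2 * froNorm (Γ₁ - Γ₂) := by
        ring

/-- the gradient of the smoothed loss is Lipschitz with constant
M = (κm²n²)⁻¹‖X‖². -/
theorem gradQsmooth_lipschitz {n m p : ℕ} (hn : 0 < n) (hm : 0 < m)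
    (τ κ : ℝ) (hτ : τ ∈ Set.Ioo (0 : ℝ) 1) (hκ : 0 < κ)
    (Y : Matrix (Fin n) (Fin m) ℝ) (X : Matrix (Fin n) (Fin p) ℝ) :
    ∀ Γ₁ Γ₂ : Matrix (Fin p) (Fin m) ℝ,
      froNorm (gradQsmooth τ κ Y X Γ₁ - gradQsmooth τ κ Y X Γ₂)
        ≤ (κ * (m : ℝ) ^ 2 * (n : ℝ) ^ 2)⁻¹ * (specNorm X) ^ 2 * froNorm (Γ₁ - Γ₂) :=
  gradQsmooth_lipschitz_general τ κ hκ Y X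
end
end

section
/- Let (X,Y) be a random vector in ℝ^{p+m} such that for each j ≤ m, conditionally on X = x the coordinate Y_j has a density f_{Y_j|X}(·|x) that is differentiable in y with |∂_y f_{Y_j|X}(y|x)| ≤ f̄′ < ∞, and such that xᵀΓ_{*j} is the conditional τ-quantile of Y_j given X = x with inf_j inf_x f_{Y_j|X}(xᵀΓ_{*j}|x) ≥ f̲ > 0. Define ν = (3/8)(f̲/f̄′) · inf over nonzero Δ ∈ K(Γ; 3) of ‖Δ‖_{L2(Π)}³ / (m^{-1} Σ_{j=1}^m E|XᵀΔ_{*j}|³), and assume ν > 0. Then for every Δ ∈ K(Γ; 3) with ‖Δ‖_{L2(Π)} ≤ 4ν, the population loss satisfies Q_τ(Γ + Δ) − Q_τ(Γ) ≥ (1/4) f̲ ‖Δ‖_{L2(Π)}². -/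
open Matrix MeasureTheory
open scoped BigOperators

noncomputable section

/-- The check (pinball) function ρ_τ(u) = u(τ − 1{u ≤ 0}). -/
def checkFn (τ u : ℝ) : ℝ := u * (τ - if u ≤ 0 then 1 else 0)

/-- Nuclear norm: sum of singular values (= sqrt of eigenvalues of AᵀA). -/
def nucNorm {n m : ℕ} (A : Matrix (Fin n) (Fin m) ℝ) : ℝ :=
  ∑ j, Real.sqrt ((Matrix.isHermitian_conjTranspose_mul_self A).eigenvalues j)

/-- ‖S‖_{L2(Π)} = sqrt( m⁻¹ E_Π ‖SᵀX‖₂² ). -/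
def L2Pi {p m : ℕ} (Pix : Measure (Fin p → ℝ)) (S : Matrix (Fin p) (Fin m) ℝ) : ℝ :=
  Real.sqrt ((m : ℝ)⁻¹ * ∫ x, (∑ j, (∑ k, x k * S k j) ^ 2) ∂Pix)

/-- P_Γ^⊥(S) = (I − P₁) S (I − P₂). -/
def Pperp {p m : ℕ} (P₁ : Matrix (Fin p) (Fin p) ℝ) (P₂ : Matrix (Fin m) (Fin m) ℝ)
    (S : Matrix (Fin p) (Fin m) ℝ) : Matrix (Fin p) (Fin m) ℝ :=
  (1 - P₁) * S * (1 - P₂)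

/-- P_Γ(S) = S − (I − P₁) S (I − P₂). -/
def Pproj {p m : ℕ} (P₁ : Matrix (Fin p) (Fin p) ℝ) (P₂ : Matrix (Fin m) (Fin m) ℝ)
    (S : Matrix (Fin p) (Fin m) ℝ) : Matrix (Fin p) (Fin m) ℝ :=
  S - Pperp P₁ P₂ S

/-- The cone K(Γ; c₀) = {S : ‖P_Γ^⊥(S)‖_* ≤ c₀‖P_Γ(S)‖_*}. -/
def coneK {p m : ℕ} (P₁ : Matrix (Fin p) (Fin p) ℝ) (P₂ : Matrix (Fin m) (Fin m) ℝ)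
    (c₀ : ℝ) : Set (Matrix (Fin p) (Fin m) ℝ) :=
  {S | nucNorm (Pperp P₁ P₂ S) ≤ c₀ * nucNorm (Pproj P₁ P₂ S)}

/-- The population loss Q_τ(S) = m⁻¹ Σⱼ E[ρ_τ(Yⱼ − XᵀS_{*j})], written through the
distribution Π of X and the conditional densities f j x of Yⱼ given X = x. -/
def Qpop {p m : ℕ} (τ : ℝ) (Pix : Measure (Fin p → ℝ))
    (f : Fin m → (Fin p → ℝ) → ℝ → ℝ) (S : Matrix (Fin p) (Fin m) ℝ) : ℝ :=
  (m : ℝ)⁻¹ * ∑ j, ∫ x, (∫ y, checkFn τ (y - ∑ k, x k * S k j) * f j x y) ∂Pix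

/-!
Writing `F` for the conditional distribution function of `Yⱼ` and `q = xᵀΓ_{*j}`, Knight's
identity gives `E ρ_τ(Yⱼ - q - d) - E ρ_τ(Yⱼ - q) = d (F(q) - τ) + ∫_q^{q+d} (q + d - y) f(y) dy`.
The first term vanishes at the quantile, and since `f ≥ f̲ - f̄′|y - q|` the second is at least
`f̲ d²/2 - f̄′|d|³/6`. Averaging over `j` and `X` gives
`Q_τ(Γ + Δ) - Q_τ(Γ) ≥ f̲‖Δ‖²/2 - f̄′ M/6` with `M` the mean cubic moment, and the definition of `ν`
together with `‖Δ‖ ≤ 4ν` bounds the cubic term by `f̲‖Δ‖²/4`.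
-/

section CheckFunction

lemma min_mul_abs_le_checkFn (τ u : ℝ) :
    min τ (1 - τ) * |u| ≤ checkFn τ u := by
  unfold checkFn
  rcases le_or_gt u 0 with hu | hu
  · rw [if_pos hu, abs_of_nonpos hu]
    nlinarith [min_le_right τ (1 - τ)]
  · rw [if_neg hu.not_ge, abs_of_pos hu]
    nlinarith [min_le_left τ (1 - τ)]

variable {τ : ℝ} {f : ℝ → ℝ}

lemma integrable_sub_mul_of_integrable_checkFn (hτ : τ ∈ Set.Ioo (0 : ℝ) 1)
    (hfnn : ∀ y, 0 ≤ f y) (hf : Integrable f) {c : ℝ}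
    (hc : Integrable (fun y => checkFn τ (y - c) * f y)) :
    Integrable (fun y => (y - c) * f y) := by
  have hκ : 0 < min τ (1 - τ) := lt_min hτ.1 (sub_pos.mpr hτ.2)
  refine (hc.const_mul (min τ (1 - τ))⁻¹).mono'
    ((continuous_id.sub continuous_const).aestronglyMeasurable.mul hf.1)
    (ae_of_all _ fun y => ?_)
  rw [norm_mul, Real.norm_of_nonneg (hfnn y), Real.norm_eq_abs, le_inv_mul_iff₀ hκ, ← mul_assoc]
  exact mul_le_mul_of_nonneg_right (min_mul_abs_le_checkFn τ _) (hfnn y)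

lemma integral_checkFn_sub_mul {c : ℝ} (hc : Integrable (fun y => (y - c) * f y)) :
    ∫ y, checkFn τ (y - c) * f y
      = τ * (∫ y, (y - c) * f y) - ∫ y in Set.Iic c, (y - c) * f y := by
  have hsplit : (fun y => checkFn τ (y - c) * f y)
      = fun y => τ * ((y - c) * f y) - (Set.Iic c).indicator (fun y => (y - c) * f y) y := by
    funext y
    by_cases hy : y ≤ c
    · simp [checkFn, hy, Set.indicator_of_mem]
      ring
    · simp [checkFn, hy, Set.indicator_of_notMem]
      ring
  rw [hsplit, integral_sub (hc.const_mul τ) (hc.indicator measurableSet_Iic),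
    integral_const_mul, integral_indicator measurableSet_Iic]

theorem integral_checkFn_add_sub_integral_checkFn (hf : Integrable f) {q : ℝ}
    (hq : Integrable (fun y => (y - q) * f y)) (d : ℝ) :
    (∫ y, checkFn τ (y - (q + d)) * f y) - ∫ y, checkFn τ (y - q) * f y
      = d * ((∫ y in Set.Iic q, f y) - τ * ∫ y, f y) + ∫ y in q..q + d, (q + d - y) * f y := by
  have hshift : (fun y => (y - (q + d)) * f y) = fun y => (y - q) * f y - d * f y := by
    funext y; ring
  have hqd : Integrable (fun y => (y - (q + d)) * f y) := hshift ▸ hq.sub (hf.const_mul d)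
  have hmean : ∫ y, (y - (q + d)) * f y = (∫ y, (y - q) * f y) - d * ∫ y, f y := by
    rw [hshift, integral_sub hq (hf.const_mul d), integral_const_mul]
  have hlower : ∫ y in Set.Iic (q + d), (y - (q + d)) * f y
      = (∫ y in Set.Iic (q + d), (y - q) * f y) - d * ∫ y in Set.Iic (q + d), f y := by
    rw [hshift, integral_sub hq.integrableOn (hf.const_mul d).integrableOn, integral_const_mul]
  have hfirst := intervalIntegral.integral_Iic_sub_Iic (hq.integrableOn (s := Set.Iic q))
    (hq.integrableOn (s := Set.Iic (q + d)))
  have hmass := intervalIntegral.integral_Iic_sub_Iic (hf.integrableOn (s := Set.Iic q))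
    (hf.integrableOn (s := Set.Iic (q + d)))
  have hkernel : ∫ y in q..q + d, (q + d - y) * f y
      = d * (∫ y in q..q + d, f y) - ∫ y in q..q + d, (y - q) * f y := by
    rw [← intervalIntegral.integral_const_mul, ← intervalIntegral.integral_sub
      (hf.const_mul d).intervalIntegrable hq.intervalIntegrable]
    exact intervalIntegral.integral_congr fun y _ => by ring
  rw [integral_checkFn_sub_mul hqd, integral_checkFn_sub_mul hq, hmean, hlower, hkernel]
  linear_combination d * hmass - hfirst

end CheckFunction

lemma integral_one_sub_mul_sub_mul (a c : ℝ) :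
    ∫ s in (0 : ℝ)..1, (1 - s) * (a - c * s) = a / 2 - c / 6 := by
  have hexpand : ∀ s : ℝ, (1 - s) * (a - c * s) = a - (a + c) * s + c * s ^ 2 := fun s => by ring
  simp only [hexpand]
  rw [intervalIntegral.integral_add (Continuous.intervalIntegrable (by fun_prop) _ _)
      (Continuous.intervalIntegrable (by fun_prop) _ _),
    intervalIntegral.integral_sub intervalIntegrable_const
      (Continuous.intervalIntegrable (by fun_prop) _ _),
    intervalIntegral.integral_const_mul, intervalIntegral.integral_const_mul, integral_id,
    integral_pow, intervalIntegral.integral_const]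
  norm_num
  ring

lemma integral_add_sub_mul_eq (f : ℝ → ℝ) (q d : ℝ) :
    ∫ y in q..q + d, (q + d - y) * f y = d ^ 2 * ∫ s in (0 : ℝ)..1, (1 - s) * f (d * s + q) := by
  have hsub := intervalIntegral.smul_integral_comp_mul_add (a := 0) (b := 1)
    (fun y => (q + d - y) * f y) d q
  simp only [mul_zero, zero_add, mul_one, smul_eq_mul] at hsub
  rw [add_comm d q] at hsub
  rw [← hsub, ← intervalIntegral.integral_const_mul, ← intervalIntegral.integral_const_mul]
  exact intervalIntegral.integral_congr fun s _ => by ring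

lemma le_integral_add_sub_mul {f : ℝ → ℝ} (hf : Continuous f) {a b q : ℝ}
    (hlow : ∀ y, a - b * |y - q| ≤ f y) (d : ℝ) :
    a / 2 * d ^ 2 - b / 6 * |d| ^ 3 ≤ ∫ y in q..q + d, (q + d - y) * f y := by
  have hmono : ∫ s in (0 : ℝ)..1, (1 - s) * (a - b * |d| * s)
      ≤ ∫ s in (0 : ℝ)..1, (1 - s) * f (d * s + q) := by
    refine intervalIntegral.integral_mono_on zero_le_one
      (Continuous.intervalIntegrable (by fun_prop) _ _)
      (Continuous.intervalIntegrable (by fun_prop) _ _) fun s hs => ?_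
    have hdist : |d * s + q - q| = |d| * s := by
      rw [add_sub_cancel_right, abs_mul, abs_of_nonneg hs.1]
    refine mul_le_mul_of_nonneg_left ?_ (sub_nonneg.mpr hs.2)
    have hy := hlow (d * s + q)
    rw [hdist] at hy
    linarith
  rw [integral_one_sub_mul_sub_mul] at hmono
  calc a / 2 * d ^ 2 - b / 6 * |d| ^ 3 = d ^ 2 * (a / 2 - b * |d| / 6) := by
        rw [pow_succ |d|, sq_abs]; ring
    _ ≤ d ^ 2 * ∫ s in (0 : ℝ)..1, (1 - s) * f (d * s + q) :=
        mul_le_mul_of_nonneg_left hmono (sq_nonneg d)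
    _ = ∫ y in q..q + d, (q + d - y) * f y := (integral_add_sub_mul_eq f q d).symm

lemma sub_mul_abs_le_of_abs_deriv_le {f f' : ℝ → ℝ} (hf : ∀ y, HasDerivAt f (f' y) y) {C : ℝ}
    (hC : ∀ y, |f' y| ≤ C) (q y : ℝ) : f q - C * |y - q| ≤ f y := by
  have hlip : |f y - f q| ≤ C * |y - q| :=
    convex_univ.norm_image_sub_le_of_norm_hasDerivWithin_le
      (fun x _ => (hf x).hasDerivWithinAt) (fun x _ => hC x) (Set.mem_univ q) (Set.mem_univ y)
  linarith [(abs_le.mp hlip).1]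

theorem integral_checkFn_shift_ge {τ : ℝ} (hτ : τ ∈ Set.Ioo (0 : ℝ) 1) {f f' : ℝ → ℝ}
    (hfnn : ∀ y, 0 ≤ f y) (hfone : ∫ y, f y = 1) (hfderiv : ∀ y, HasDerivAt f (f' y) y)
    {a C q : ℝ} (hC : ∀ y, |f' y| ≤ C) (ha : a ≤ f q) (hq : ∫ y in Set.Iic q, f y = τ)
    (hint : ∀ c, Integrable (fun y => checkFn τ (y - c) * f y)) (d : ℝ) :
    a / 2 * d ^ 2 - C / 6 * |d| ^ 3
      ≤ (∫ y, checkFn τ (y - (q + d)) * f y) - ∫ y, checkFn τ (y - q) * f y := by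
  have hf : Integrable f := Integrable.of_integral_ne_zero (by rw [hfone]; exact one_ne_zero)
  rw [integral_checkFn_add_sub_integral_checkFn hf
      (integrable_sub_mul_of_integrable_checkFn hτ hfnn hf (hint q)) d,
    hq, hfone, mul_one, sub_self, mul_zero, zero_add]
  exact le_integral_add_sub_mul (continuous_iff_continuousAt.mpr fun y => (hfderiv y).continuousAt)
    (fun y => by linarith [sub_mul_abs_le_of_abs_deriv_le hfderiv hC q y]) d

lemma Qpop_add_sub_Qpop_ge {p m : ℕ} {τ a C : ℝ} {Pix : Measure (Fin p → ℝ)}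
    {f : Fin m → (Fin p → ℝ) → ℝ → ℝ} {Γ Δ : Matrix (Fin p) (Fin m) ℝ}
    (hint : ∀ (S : Matrix (Fin p) (Fin m) ℝ) (j : Fin m),
      Integrable (fun x => ∫ y, checkFn τ (y - ∑ k, x k * S k j) * f j x y) Pix)
    (hsq : Integrable (fun x => ∑ j, (∑ k, x k * Δ k j) ^ 2) Pix)
    (hcube : ∀ j, Integrable (fun x => |∑ k, x k * Δ k j| ^ 3) Pix)
    (hpt : ∀ j x, a / 2 * (∑ k, x k * Δ k j) ^ 2 - C / 6 * |∑ k, x k * Δ k j| ^ 3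
      ≤ (∫ y, checkFn τ (y - (∑ k, x k * Γ k j + ∑ k, x k * Δ k j)) * f j x y)
        - ∫ y, checkFn τ (y - ∑ k, x k * Γ k j) * f j x y) :
    a / 2 * L2Pi Pix Δ ^ 2 - C / 6 * ((m : ℝ)⁻¹ * ∑ j, ∫ x, |∑ k, x k * Δ k j| ^ 3 ∂Pix)
      ≤ Qpop τ Pix f (Γ + Δ) - Qpop τ Pix f Γ := by
  have hshifted := hint (Γ + Δ)
  simp only [Matrix.add_apply, mul_add, Finset.sum_add_distrib] at hshifted
  have hcubes : Integrable (fun x => ∑ j, |∑ k, x k * Δ k j| ^ 3) Pix :=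
    integrable_finsetSum _ fun j _ => hcube j
  have hlhs : a / 2 * L2Pi Pix Δ ^ 2 - C / 6 * ((m : ℝ)⁻¹ * ∑ j, ∫ x, |∑ k, x k * Δ k j| ^ 3 ∂Pix)
      = (m : ℝ)⁻¹ * ∫ x, (a / 2 * ∑ j, (∑ k, x k * Δ k j) ^ 2
          - C / 6 * ∑ j, |∑ k, x k * Δ k j| ^ 3) ∂Pix := by
    rw [L2Pi, Real.sq_sqrt (by positivity), integral_sub (hsq.const_mul _) (hcubes.const_mul _),
      integral_const_mul, integral_const_mul, integral_finsetSum _ fun j _ => hcube j]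
    ring
  have hrhs : Qpop τ Pix f (Γ + Δ) - Qpop τ Pix f Γ
      = (m : ℝ)⁻¹ * ∫ x, ∑ j, ((∫ y, checkFn τ (y - (∑ k, x k * Γ k j + ∑ k, x k * Δ k j))
          * f j x y) - ∫ y, checkFn τ (y - ∑ k, x k * Γ k j) * f j x y) ∂Pix := by
    simp only [Qpop, Matrix.add_apply, mul_add, Finset.sum_add_distrib]
    have hswap := integral_finsetSum (μ := Pix) Finset.univ fun j _ => (hshifted j).sub (hint Γ j)
    simp only [Pi.sub_apply, integral_sub (hshifted _) (hint Γ _)] at hswap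
    rw [hswap, Finset.sum_sub_distrib, mul_sub]
  rw [hlhs, hrhs]
  refine mul_le_mul_of_nonneg_left (integral_mono ((hsq.const_mul _).sub (hcubes.const_mul _))
    (integrable_finsetSum _ fun j _ => (hshifted j).sub (hint Γ j)) fun x => ?_) (by positivity)
  simpa only [Finset.mul_sum, ← Finset.sum_sub_distrib] using Finset.sum_le_sum fun j _ => hpt j x

lemma cubic_le_of_le_restrictedNonlinearity {a C L M ν : ℝ} (ha : 0 < a) (hC : 0 < C)
    (hM : 0 ≤ M) (hνpos : 0 < ν) (hν : ν ≤ 3 / 8 * (a / C) * (L ^ 3 / M)) (hL : L ≤ 4 * ν) :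
    C / 6 * M ≤ a / 4 * L ^ 2 := by
  rcases hM.eq_or_lt with rfl | hMpos
  · simp only [mul_zero]; positivity
  have hνM : ν * M ≤ 3 / 8 * (a / C) * L ^ 3 := by
    rwa [← mul_div_assoc, le_div_iff₀ hMpos] at hν
  have hcube : L ^ 3 ≤ 4 * ν * L ^ 2 := by
    calc L ^ 3 = L * L ^ 2 := by ring
      _ ≤ 4 * ν * L ^ 2 := mul_le_mul_of_nonneg_right hL (sq_nonneg L)
  have hMbound : M ≤ 3 / 2 * (a / C) * L ^ 2 := by
    refine le_of_mul_le_mul_left ?_ hνpos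
    nlinarith [div_pos ha hC]
  calc C / 6 * M ≤ C / 6 * (3 / 2 * (a / C) * L ^ 2) := by gcongr
    _ = a / 4 * L ^ 2 := by field_simp; ring

theorem population_loss_minorization_general {p m : ℕ}
    (τ : ℝ) (hτ : τ ∈ Set.Ioo (0 : ℝ) 1)
    (Pix : Measure (Fin p → ℝ))
    (Γ : Matrix (Fin p) (Fin m) ℝ)
    -- conditional densities f j x of Y_j given X = x, with derivative f' j x
    (f f' : Fin m → (Fin p → ℝ) → ℝ → ℝ)
    (hfnn : ∀ j x y, 0 ≤ f j x y)
    (hfone : ∀ j x, ∫ y, f j x y = 1)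
    (hfderiv : ∀ j x y, HasDerivAt (f j x) (f' j x y) y)
    (fbar' funder : ℝ) (hfbar : 0 < fbar') (hfunder : 0 < funder)
    (hfb : ∀ j x y, |f' j x y| ≤ fbar')
    (hfl : ∀ j x, funder ≤ f j x (∑ k, x k * Γ k j))
    -- xᵀΓ_{*j} is the conditional τ-quantile of Y_j given X = x
    (hquant : ∀ j x, ∫ y in Set.Iic (∑ k, x k * Γ k j), f j x y = τ)
    -- projections onto the column spaces of Γ and Γᵀ
    (P₁ : Matrix (Fin p) (Fin p) ℝ) (P₂ : Matrix (Fin m) (Fin m) ℝ)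
    -- integrability of the quantities appearing in the statement
    (hint1 : ∀ (S : Matrix (Fin p) (Fin m) ℝ) (j : Fin m),
      Integrable (fun x => ∫ y, checkFn τ (y - ∑ k, x k * S k j) * f j x y) Pix)
    (hint2 : ∀ (j : Fin m) (x : Fin p → ℝ) (c : ℝ),
      Integrable (fun y => checkFn τ (y - c) * f j x y))
    (hint3 : ∀ (Δ : Matrix (Fin p) (Fin m) ℝ) (j : Fin m),
      Integrable (fun x => |∑ k, x k * Δ k j| ^ 3) Pix)
    (hint4 : ∀ S : Matrix (Fin p) (Fin m) ℝ,
      Integrable (fun x => ∑ j, (∑ k, x k * S k j) ^ 2) Pix)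
    -- the restricted nonlinearity constant
    (ν : ℝ)
    (hν : ν = (3 / 8) * (funder / fbar') * sInf
        ((fun Δ => (L2Pi Pix Δ) ^ 3
            / ((m : ℝ)⁻¹ * ∑ j, ∫ x, |∑ k, x k * Δ k j| ^ 3 ∂Pix)) ''
          {Δ : Matrix (Fin p) (Fin m) ℝ | Δ ∈ coneK P₁ P₂ 3 ∧ Δ ≠ 0}))
    (hνpos : 0 < ν) :
    ∀ Δ ∈ coneK P₁ P₂ 3, L2Pi Pix Δ ≤ 4 * ν →
      Qpop τ Pix f (Γ + Δ) - Qpop τ Pix f Γ ≥ (1 / 4) * funder * (L2Pi Pix Δ) ^ 2 := by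
  intro Δ hΔ hΔν
  rcases eq_or_ne Δ 0 with rfl | hΔ0
  · simp [L2Pi]
  have hloss := Qpop_add_sub_Qpop_ge (Γ := Γ) hint1 (hint4 Δ) (hint3 Δ) fun j x =>
    integral_checkFn_shift_ge hτ (hfnn j x) (hfone j x) (hfderiv j x) (hfb j x) (hfl j x)
      (hquant j x) (hint2 j x) _
  have hratio : ν ≤ 3 / 8 * (funder / fbar') * (L2Pi Pix Δ ^ 3
      / ((m : ℝ)⁻¹ * ∑ j, ∫ x, |∑ k, x k * Δ k j| ^ 3 ∂Pix)) := by
    rw [hν]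
    refine mul_le_mul_of_nonneg_left (csInf_le ⟨0, ?_⟩ ⟨Δ, ⟨hΔ, hΔ0⟩, rfl⟩) (by positivity)
    rintro _ ⟨S, -, rfl⟩
    exact div_nonneg (pow_nonneg (Real.sqrt_nonneg _) 3) (by positivity)
  have hcubic := cubic_le_of_le_restrictedNonlinearity hfunder hfbar (by positivity) hνpos
    hratio hΔν
  linarith

/-- restricted-nonlinearity minorization of the population loss: if
Δ ∈ K(Γ;3) and ‖Δ‖_{L2(Π)} ≤ 4ν, then Q_τ(Γ+Δ) − Q_τ(Γ) ≥ (1/4)f̲‖Δ‖²_{L2(Π)}. -/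
theorem population_loss_minorization {p m : ℕ} (hm : 0 < m)
    (τ : ℝ) (hτ : τ ∈ Set.Ioo (0 : ℝ) 1)
    (Pix : Measure (Fin p → ℝ)) [IsProbabilityMeasure Pix]
    (Γ : Matrix (Fin p) (Fin m) ℝ)
    -- conditional densities f j x of Y_j given X = x, with derivative f' j x
    (f f' : Fin m → (Fin p → ℝ) → ℝ → ℝ)
    (hfmeas : ∀ j x, Measurable (f j x))
    (hfnn : ∀ j x y, 0 ≤ f j x y)
    (hfone : ∀ j x, ∫ y, f j x y = 1)
    (hfderiv : ∀ j x y, HasDerivAt (f j x) (f' j x y) y)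
    (fbar' funder : ℝ) (hfbar : 0 < fbar') (hfunder : 0 < funder)
    (hfb : ∀ j x y, |f' j x y| ≤ fbar')
    (hfl : ∀ j x, funder ≤ f j x (∑ k, x k * Γ k j))
    -- xᵀΓ_{*j} is the conditional τ-quantile of Y_j given X = x
    (hquant : ∀ j x, ∫ y in Set.Iic (∑ k, x k * Γ k j), f j x y = τ)
    -- projections onto the column spaces of Γ and Γᵀ
    (P₁ : Matrix (Fin p) (Fin p) ℝ) (P₂ : Matrix (Fin m) (Fin m) ℝ)
    (hP₁sym : P₁ᵀ = P₁) (hP₁idem : P₁ * P₁ = P₁)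
    (hP₁range : ∀ v : Fin p → ℝ, P₁.mulVec v = v ↔ v ∈ Set.range Γ.mulVec)
    (hP₂sym : P₂ᵀ = P₂) (hP₂idem : P₂ * P₂ = P₂)
    (hP₂range : ∀ v : Fin m → ℝ, P₂.mulVec v = v ↔ v ∈ Set.range Γᵀ.mulVec)
    -- integrability of the quantities appearing in the statement
    (hint1 : ∀ (S : Matrix (Fin p) (Fin m) ℝ) (j : Fin m),
      Integrable (fun x => ∫ y, checkFn τ (y - ∑ k, x k * S k j) * f j x y) Pix)
    (hint2 : ∀ (j : Fin m) (x : Fin p → ℝ) (c : ℝ),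
      Integrable (fun y => checkFn τ (y - c) * f j x y))
    (hint3 : ∀ (Δ : Matrix (Fin p) (Fin m) ℝ) (j : Fin m),
      Integrable (fun x => |∑ k, x k * Δ k j| ^ 3) Pix)
    (hint4 : ∀ S : Matrix (Fin p) (Fin m) ℝ,
      Integrable (fun x => ∑ j, (∑ k, x k * S k j) ^ 2) Pix)
    -- the restricted nonlinearity constant
    (ν : ℝ)
    (hν : ν = (3 / 8) * (funder / fbar') * sInf
        ((fun Δ => (L2Pi Pix Δ) ^ 3
            / ((m : ℝ)⁻¹ * ∑ j, ∫ x, |∑ k, x k * Δ k j| ^ 3 ∂Pix)) ''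
          {Δ : Matrix (Fin p) (Fin m) ℝ | Δ ∈ coneK P₁ P₂ 3 ∧ Δ ≠ 0}))
    (hνpos : 0 < ν) :
    ∀ Δ ∈ coneK P₁ P₂ 3, L2Pi Pix Δ ≤ 4 * ν →
      Qpop τ Pix f (Γ + Δ) - Qpop τ Pix f Γ ≥ (1 / 4) * funder * (L2Pi Pix Δ) ^ 2 :=
  population_loss_minorization_general τ hτ Pix Γ f f' hfnn hfone hfderiv fbar' funder hfbar hfunder
    hfb hfl hquant P₁ P₂ hint1 hint2 hint3 hint4 ν hν hνpos
end
end

section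
/- Let Z be an integrable real random variable with cumulative distribution function F, let τ ∈ (0,1), and let a ∈ ℝ satisfy F(a) = τ (a is a τ-quantile) and P(Z = z) = 0 for all z (F continuous). Then for every v ∈ ℝ, E[ρ_τ(Z − a − v)] − E[ρ_τ(Z − a)] = ∫_0^v (F(a + z) − F(a)) dz. -/
/-!
Writing `ρ_τ(u) = τ u - min u 0`, the linear parts of the two check losses differ by `-τ v`, while
`min u 0 - min (u - v) 0 = ∫₀^v 1{u ≤ z} dz`. Taking expectations and swapping the integrals
(Fubini) turns the latter into `∫₀^v F(a + z) dz`, and `F a = τ` rewrites `τ v` as `∫₀^v F a dz`.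
-/

open MeasureTheory

noncomputable section

lemma checkFn_eq_mul_sub_min (τ u : ℝ) : checkFn τ u = τ * u - min u 0 := by
  unfold checkFn
  split_ifs with h
  · rw [min_eq_left h]; ring
  · rw [min_eq_right (not_le.mp h).le]; ring

lemma checkFn_sub_sub_checkFn (τ u v : ℝ) :
    checkFn τ (u - v) - checkFn τ u = min u 0 - min (u - v) 0 - τ * v := by
  rw [checkFn_eq_mul_sub_min, checkFn_eq_mul_sub_min]; ring

lemma integrable_checkFn_comp {Ω : Type*} [MeasurableSpace Ω] {μ : Measure Ω} {X : Ω → ℝ}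
    (hX : Integrable X μ) (τ : ℝ) : Integrable (fun ω => checkFn τ (X ω)) μ := by
  simp only [checkFn_eq_mul_sub_min]
  exact (hX.const_mul τ).sub (hX.inf (integrable_zero _ _ μ))

lemma intervalIntegral_indicator_Ici (u w : ℝ) :
    ∫ z in u..w, (Set.Ici u).indicator 1 z = max (w - u) 0 := by
  rcases le_or_gt u w with h | h
  · rw [intervalIntegral.integral_of_le h, max_eq_left (sub_nonneg.mpr h),
      setIntegral_congr_fun measurableSet_Ioc (g := fun _ => (1 : ℝ))
        fun z hz => Set.indicator_of_mem (Set.mem_Ici.mpr hz.1.le) _]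
    simp [h]
  · have hset : Set.Ioc w u ∩ Set.Ici u = {u} := by
      ext z; simp only [Set.mem_inter_iff, Set.mem_Ioc, Set.mem_Ici, Set.mem_singleton_iff]
      constructor
      · rintro ⟨⟨-, h1⟩, h2⟩; exact le_antisymm h1 h2
      · rintro rfl; exact ⟨⟨h, le_rfl⟩, le_rfl⟩
    rw [intervalIntegral.integral_of_ge h.le, max_eq_right (sub_nonpos.mpr h.le),
      integral_indicator_one measurableSet_Ici, measureReal_restrict_apply measurableSet_Ici,
      Set.inter_comm, hset, measureReal_def, Real.volume_singleton, ENNReal.toReal_zero, neg_zero]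

lemma min_zero_sub_min_zero_eq_intervalIntegral (u v : ℝ) :
    min u 0 - min (u - v) 0 = ∫ z in (0 : ℝ)..v, (Set.Ici u).indicator 1 z := by
  have hint : ∀ w, IntervalIntegrable ((Set.Ici u).indicator (1 : ℝ → ℝ)) volume u w :=
    fun w => ⟨(integrable_const 1).indicator measurableSet_Ici,
      (integrable_const 1).indicator measurableSet_Ici⟩
  rw [← intervalIntegral.integral_interval_sub_left (hint v) (hint 0),
    intervalIntegral_indicator_Ici, intervalIntegral_indicator_Ici]
  simp only [min_def, max_def]
  split_ifs <;> linarith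

lemma integral_min_zero_sub_eq_intervalIntegral_cdf {Ω : Type*} [MeasurableSpace Ω]
    {μ : Measure Ω} [IsFiniteMeasure μ] {X : Ω → ℝ} (hX : Measurable X) (v : ℝ) :
    ∫ ω, (min (X ω) 0 - min (X ω - v) 0) ∂μ = ∫ z in (0 : ℝ)..v, μ.real {ω | X ω ≤ z} := by
  set S := {p : ℝ × Ω | X p.2 ≤ p.1}
  have hS : MeasurableSet S := measurableSet_le (hX.comp measurable_snd) measurable_fst
  have : IsFiniteMeasure (volume.restrict (Set.uIoc 0 v)) := Real.isFiniteMeasure_restrict_Ioc _ _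
  calc ∫ ω, (min (X ω) 0 - min (X ω - v) 0) ∂μ
      = ∫ ω, (∫ z in (0 : ℝ)..v, S.indicator 1 (z, ω)) ∂μ := by
        simp only [min_zero_sub_min_zero_eq_intervalIntegral]; rfl
    _ = ∫ z in (0 : ℝ)..v, ∫ ω, S.indicator 1 (z, ω) ∂μ :=
        (intervalIntegral_integral_swap (f := fun z ω => S.indicator 1 (z, ω))
          ((integrable_const (1 : ℝ)).indicator hS)).symm
    _ = ∫ z in (0 : ℝ)..v, μ.real {ω | X ω ≤ z} := by
        congr with z
        exact integral_indicator_one (measurableSet_le hX measurable_const)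

theorem expected_check_loss_integral_identity_general
    {Ω : Type*} [MeasurableSpace Ω] (μ : Measure Ω) [IsProbabilityMeasure μ]
    (Z : Ω → ℝ) (hZmeas : Measurable Z) (hZint : Integrable Z μ)
    (τ a : ℝ)
    (F : ℝ → ℝ) (hF : ∀ z : ℝ, F z = (μ {ω | Z ω ≤ z}).toReal)
    (hquant : F a = τ) :
    ∀ v : ℝ,
      (∫ ω, checkFn τ (Z ω - a - v) ∂μ) - (∫ ω, checkFn τ (Z ω - a) ∂μ)
        = ∫ z in (0 : ℝ)..v, (F (a + z) - F a) := by
  intro v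
  have hU : Integrable (fun ω => Z ω - a) μ := hZint.sub (integrable_const a)
  have hcdf : ∀ z, F (a + z) = μ.real {ω | Z ω - a ≤ z} := fun z => by
    simp only [hF, sub_le_iff_le_add', measureReal_def]
  have hF_mono : Monotone fun z => F (a + z) := fun x y hxy => by
    simp only [hF]
    exact ENNReal.toReal_mono (measure_ne_top μ _)
      (measure_mono fun ω (hω : Z ω ≤ a + x) => hω.trans (add_le_add_right hxy a))
  have hUv : Integrable (fun ω => Z ω - a - v) μ := hU.sub (integrable_const v)
  have hmin : Integrable (fun ω => min (Z ω - a) 0 - min (Z ω - a - v) 0) μ :=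
    (hU.inf (integrable_zero _ _ μ)).sub (hUv.inf (integrable_zero _ _ μ))
  calc (∫ ω, checkFn τ (Z ω - a - v) ∂μ) - (∫ ω, checkFn τ (Z ω - a) ∂μ)
      = ∫ ω, (min (Z ω - a) 0 - min (Z ω - a - v) 0 - τ * v) ∂μ := by
        rw [← integral_sub (integrable_checkFn_comp hUv τ) (integrable_checkFn_comp hU τ)]
        simp only [checkFn_sub_sub_checkFn]
    _ = (∫ z in (0 : ℝ)..v, μ.real {ω | Z ω - a ≤ z}) - τ * v := by
        rw [integral_sub hmin (integrable_const _), integral_const, probReal_univ, one_smul,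
          integral_min_zero_sub_eq_intervalIntegral_cdf (X := fun ω => Z ω - a)
            (hZmeas.sub_const a)]
    _ = ∫ z in (0 : ℝ)..v, (F (a + z) - F a) := by
        rw [intervalIntegral.integral_sub hF_mono.intervalIntegrable
          intervalIntegrable_const, intervalIntegral.integral_const]
        simp [hcdf, hquant, mul_comm]

/-- if Z is an integrable real random variable with continuous cdf F and
F(a) = τ, then E[ρ_τ(Z − a − v)] − E[ρ_τ(Z − a)] = ∫₀^v (F(a+z) − F(a)) dz. -/
theorem expected_check_loss_integral_identity
    {Ω : Type*} [MeasurableSpace Ω] (μ : Measure Ω) [IsProbabilityMeasure μ]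
    (Z : Ω → ℝ) (hZmeas : Measurable Z) (hZint : Integrable Z μ)
    (τ a : ℝ) (hτ : τ ∈ Set.Ioo (0 : ℝ) 1)
    (F : ℝ → ℝ) (hF : ∀ z : ℝ, F z = (μ {ω | Z ω ≤ z}).toReal)
    (hquant : F a = τ) (hcont : ∀ z : ℝ, μ {ω | Z ω = z} = 0) :
    ∀ v : ℝ,
      (∫ ω, checkFn τ (Z ω - a - v) ∂μ) - (∫ ω, checkFn τ (Z ω - a) ∂μ)
        = ∫ z in (0 : ℝ)..v, (F (a + z) - F a) :=
  expected_check_loss_integral_identity_general μ Z hZmeas hZint τ a F hF hquant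
end
end

section
/- Let Γ ∈ ℝ^{p×m} have rank r. Then for every Δ ∈ ℝ^{p×m}, the nuclear norm satisfies ‖Γ‖_* − ‖Γ + Δ‖_* ≤ ‖P_Γ(Δ)‖_* − ‖P_Γ^⊥(Δ)‖_*; in particular, ‖Γ + P_Γ^⊥(Δ)‖_* = ‖Γ‖_* + ‖P_Γ^⊥(Δ)‖_* (decomposability of the nuclear norm along the support of Γ). -/
open Matrix
open scoped BigOperators

noncomputable section

/-!
The nuclear norm is dual to the operator norm: `trace (Xᵀ A) ≤ ‖A‖_*` for every contraction `X`,
with equality for `X = A (AᵀA)^{-1/2}` (inverting only on the support of `AᵀA`). Duality gives the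
triangle inequality. If `A = P A Q` and `B = P^⊥ B Q^⊥` for orthogonal projections `P`, `Q`, then
compressing dual certificates `X` of `A` and `Y` of `B` to `P X Q + P^⊥ Y Q^⊥` gives a contraction
certifying `‖A + B‖_* ≥ ‖A‖_* + ‖B‖_*`. This is applied to `A = Γ` and `B = P_Γ^⊥(Δ)`, and the
inequality follows from the triangle inequality for `Γ + P_Γ^⊥(Δ) = (Γ + Δ) - P_Γ(Δ)`.
-/

section Contraction

variable {ι κ μ : Type*} [Fintype ι] [Fintype κ] [Fintype μ]

def IsContraction (X : Matrix ι κ ℝ) : Prop :=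
  ∀ u : κ → ℝ, (X *ᵥ u) ⬝ᵥ (X *ᵥ u) ≤ u ⬝ᵥ u

lemma dotProduct_le_sqrt_mul_sqrt (x y : ι → ℝ) : x ⬝ᵥ y ≤ √(x ⬝ᵥ x) * √(y ⬝ᵥ y) := by
  simpa [dotProduct, sq] using Real.sum_mul_le_sqrt_mul_sqrt Finset.univ x y

lemma dotProduct_add_self_of_dotProduct_eq_zero {x y : ι → ℝ} (h : x ⬝ᵥ y = 0) :
    (x + y) ⬝ᵥ (x + y) = x ⬝ᵥ x + y ⬝ᵥ y := by
  rw [add_dotProduct, dotProduct_add, dotProduct_add, dotProduct_comm y x, h]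
  ring

lemma IsContraction.mul {X : Matrix ι κ ℝ} {Y : Matrix κ μ ℝ} (hX : IsContraction X)
    (hY : IsContraction Y) : IsContraction (X * Y) := fun u => by
  rw [← mulVec_mulVec]
  exact (hX _).trans (hY u)

lemma isContraction_of_transpose_mul_self_eq_diagonal [DecidableEq κ] {X : Matrix ι κ ℝ}
    {d : κ → ℝ} (hX : Xᵀ * X = diagonal d) (hd : ∀ j, d j ≤ 1) : IsContraction X := by
  intro u
  have hquad : (X *ᵥ u) ⬝ᵥ (X *ᵥ u) = ∑ j, d j * (u j * u j) := by
    rw [dotProduct_comm, dotProduct_mulVec, ← mulVec_transpose, mulVec_mulVec, hX]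
    simp only [dotProduct, mulVec_diagonal, mul_assoc]
  rw [hquad]
  exact Finset.sum_le_sum fun j _ => by nlinarith [hd j, mul_self_nonneg (u j)]

lemma trace_transpose_mul_compress {P : Matrix ι ι ℝ} {Q : Matrix κ κ ℝ} (hP : Pᵀ = P)
    (hQ : Qᵀ = Q) (X A : Matrix ι κ ℝ) :
    trace ((P * X * Q)ᵀ * A) = trace (Xᵀ * (P * A * Q)) := by
  rw [transpose_mul, transpose_mul, hP, hQ, Matrix.mul_assoc, Matrix.mul_assoc, trace_mul_comm]
  simp only [Matrix.mul_assoc]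

end Contraction

section OrthogonalProjection

variable {ι κ : Type*} [Fintype ι] [Fintype κ]

lemma isStarProjection_iff_transpose {P : Matrix ι ι ℝ} :
    IsStarProjection P ↔ P * P = P ∧ Pᵀ = P := by
  rw [isStarProjection_iff', star_eq_conjTranspose, conjTranspose_eq_transpose_of_trivial]

variable [DecidableEq ι] [DecidableEq κ] {P : Matrix ι ι ℝ}

lemma IsStarProjection.mulVec_dotProduct_one_sub_mulVec (hP : IsStarProjection P) (v w : ι → ℝ) :
    (P *ᵥ v) ⬝ᵥ ((1 - P) *ᵥ w) = 0 := by
  have hPt := (isStarProjection_iff_transpose.1 hP).2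
  rw [dotProduct_mulVec, ← mulVec_transpose, transpose_sub, transpose_one, hPt, mulVec_mulVec,
    hP.one_sub_mul_self, zero_mulVec, zero_dotProduct]

lemma IsStarProjection.dotProduct_add_one_sub (hP : IsStarProjection P) (v : ι → ℝ) :
    (P *ᵥ v) ⬝ᵥ (P *ᵥ v) + ((1 - P) *ᵥ v) ⬝ᵥ ((1 - P) *ᵥ v) = v ⬝ᵥ v := by
  rw [← dotProduct_add_self_of_dotProduct_eq_zero (hP.mulVec_dotProduct_one_sub_mulVec v v),
    ← add_mulVec, add_sub_cancel, one_mulVec]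

lemma IsStarProjection.isContraction (hP : IsStarProjection P) : IsContraction P := fun v => by
  rw [← hP.dotProduct_add_one_sub v]
  exact le_add_of_nonneg_right (dotProduct_self_star_nonneg _)

lemma IsContraction.add_block {Q : Matrix κ κ ℝ} (hP : IsStarProjection P)
    (hQ : IsStarProjection Q) {X Y : Matrix ι κ ℝ} (hX : IsContraction X) (hY : IsContraction Y) :
    IsContraction (P * X * Q + (1 - P) * Y * (1 - Q)) := by
  intro u
  rw [add_mulVec, ← mulVec_mulVec, ← mulVec_mulVec (M := (1 - P) * Y),
    ← hQ.dotProduct_add_one_sub u, dotProduct_add_self_of_dotProduct_eq_zero]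
  · exact add_le_add ((hP.isContraction.mul hX) _) ((hP.one_sub.isContraction.mul hY) _)
  · rw [← mulVec_mulVec, ← mulVec_mulVec]
    exact hP.mulVec_dotProduct_one_sub_mulVec _ _

end OrthogonalProjection

lemma mul_eq_self_of_mulVec_eq_on_range {ι κ R : Type*} [Fintype ι] [Fintype κ] [DecidableEq κ]
    [CommSemiring R] {M : Matrix ι κ R} {P : Matrix ι ι R}
    (h : ∀ v ∈ Set.range M.mulVec, P *ᵥ v = v) : P * M = M := by
  refine ext_of_mulVec_single fun j => ?_
  rw [← mulVec_mulVec]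
  exact h _ ⟨_, rfl⟩

lemma exists_orthogonal_transpose_mul_self_eq_diagonal {ι κ : Type*} [Fintype ι] [Fintype κ]
    [DecidableEq κ] (A : Matrix ι κ ℝ) :
    ∃ U : Matrix κ κ ℝ, Uᵀ * U = 1 ∧ U * Uᵀ = 1 ∧
      (A * U)ᵀ * (A * U) = diagonal (isHermitian_conjTranspose_mul_self A).eigenvalues := by
  set hS := isHermitian_conjTranspose_mul_self A
  refine ⟨hS.eigenvectorUnitary, ?_, ?_, ?_⟩
  · simpa [star_eq_conjTranspose] using Unitary.coe_star_mul_self hS.eigenvectorUnitary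
  · simpa [star_eq_conjTranspose] using Unitary.coe_mul_star_self hS.eigenvectorUnitary
  · simpa [star_eq_conjTranspose, Function.comp_def, Matrix.mul_assoc] using
      hS.conjStarAlgAut_star_eigenvectorUnitary

section NuclearNorm

variable {p m : ℕ}

lemma trace_transpose_mul_le_nucNorm {X : Matrix (Fin p) (Fin m) ℝ} (hX : IsContraction X)
    (A : Matrix (Fin p) (Fin m) ℝ) : trace (Xᵀ * A) ≤ nucNorm A := by
  obtain ⟨U, hUtU, hUUt, hAU⟩ := exists_orthogonal_transpose_mul_self_eq_diagonal A
  have htrace : trace (Xᵀ * A) = trace ((X * U)ᵀ * (A * U)) :=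
    calc trace (Xᵀ * A) = trace (Xᵀ * A * (U * Uᵀ)) := by rw [hUUt, Matrix.mul_one]
      _ = trace (Uᵀ * (Xᵀ * A * U)) := by rw [← Matrix.mul_assoc, trace_mul_comm]
      _ = trace ((X * U)ᵀ * (A * U)) := by simp only [transpose_mul, Matrix.mul_assoc]
  rw [htrace, nucNorm]
  refine Finset.sum_le_sum fun j _ => ?_
  -- `(X * U)ᵀ j = X *ᵥ Uᵀ j` definitionally, and `Uᵀ j` is a unit eigenvector of `AᵀA`
  have hXcol : (X * U)ᵀ j ⬝ᵥ (X * U)ᵀ j ≤ 1 :=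
    (hX (Uᵀ j)).trans_eq ((congrFun (congrFun hUtU j) j).trans (one_apply_eq j))
  have hAcol : (A * U)ᵀ j ⬝ᵥ (A * U)ᵀ j = (isHermitian_conjTranspose_mul_self A).eigenvalues j :=
    (congrFun (congrFun hAU j) j).trans (diagonal_apply_eq _ j)
  calc (X * U)ᵀ j ⬝ᵥ (A * U)ᵀ j
      ≤ √((X * U)ᵀ j ⬝ᵥ (X * U)ᵀ j) * √((A * U)ᵀ j ⬝ᵥ (A * U)ᵀ j) :=
        dotProduct_le_sqrt_mul_sqrt _ _
    _ ≤ 1 * √((A * U)ᵀ j ⬝ᵥ (A * U)ᵀ j) := by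
        gcongr
        exact Real.sqrt_le_one.2 hXcol
    _ = _ := by rw [one_mul, hAcol]

lemma exists_isContraction_trace_eq_nucNorm (A : Matrix (Fin p) (Fin m) ℝ) :
    ∃ X : Matrix (Fin p) (Fin m) ℝ, IsContraction X ∧ trace (Xᵀ * A) = nucNorm A := by
  obtain ⟨U, hUtU, hUUt, hAU⟩ := exists_orthogonal_transpose_mul_self_eq_diagonal A
  set ev := (isHermitian_conjTranspose_mul_self A).eigenvalues
  -- `(√0)⁻¹ = 0`, so `D` inverts `√(AᵀA)` on its support and vanishes on its kernel
  set D := diagonal fun j => (√(ev j))⁻¹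
  have hDt : Dᵀ = D := diagonal_transpose _
  refine ⟨A * U * D * Uᵀ, ?_, ?_⟩
  · have hAUD : (A * U * D)ᵀ * (A * U * D) = diagonal fun j => √(ev j) / √(ev j) :=
      calc (A * U * D)ᵀ * (A * U * D) = D * ((A * U)ᵀ * (A * U)) * D := by
            simp only [transpose_mul, hDt, Matrix.mul_assoc]
        _ = _ := by
            rw [hAU, diagonal_mul_diagonal, diagonal_mul_diagonal]
            congr 1
            funext j
            calc (√(ev j))⁻¹ * ev j * (√(ev j))⁻¹ = ev j / √(ev j) / √(ev j) := by ring
              _ = √(ev j) / √(ev j) := by rw [Real.div_sqrt]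
    refine (isContraction_of_transpose_mul_self_eq_diagonal hAUD fun j => div_self_le_one _).mul
      (isContraction_of_transpose_mul_self_eq_diagonal (d := 1) ?_ fun _ => le_rfl)
    rw [transpose_transpose, hUUt]
    exact diagonal_one.symm
  · calc trace ((A * U * D * Uᵀ)ᵀ * A) = trace (U * (D * ((A * U)ᵀ * A))) := by
          simp only [transpose_mul, transpose_transpose, hDt, Matrix.mul_assoc]
      _ = trace (D * ((A * U)ᵀ * (A * U))) := by
          rw [trace_mul_comm]
          simp only [Matrix.mul_assoc]
      _ = ∑ j, (√(ev j))⁻¹ * ev j := by rw [hAU, diagonal_mul_diagonal, trace_diagonal]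
      _ = nucNorm A := Finset.sum_congr rfl fun j _ => by
          rw [mul_comm, ← div_eq_mul_inv, Real.div_sqrt]

lemma nucNorm_add_le (A B : Matrix (Fin p) (Fin m) ℝ) :
    nucNorm (A + B) ≤ nucNorm A + nucNorm B := by
  obtain ⟨X, hX, hXAB⟩ := exists_isContraction_trace_eq_nucNorm (A + B)
  rw [← hXAB, Matrix.mul_add, trace_add]
  exact add_le_add (trace_transpose_mul_le_nucNorm hX A) (trace_transpose_mul_le_nucNorm hX B)

lemma nucNorm_neg (A : Matrix (Fin p) (Fin m) ℝ) : nucNorm (-A) = nucNorm A := by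
  simp [nucNorm]

lemma nucNorm_sub_le (A B : Matrix (Fin p) (Fin m) ℝ) :
    nucNorm (A - B) ≤ nucNorm A + nucNorm B := by
  simpa [sub_eq_add_neg, nucNorm_neg] using nucNorm_add_le A (-B)

lemma nucNorm_add_eq_of_block {P : Matrix (Fin p) (Fin p) ℝ} {Q : Matrix (Fin m) (Fin m) ℝ}
    (hP : IsStarProjection P) (hQ : IsStarProjection Q) {A B : Matrix (Fin p) (Fin m) ℝ}
    (hA : P * A * Q = A) (hB : (1 - P) * B * (1 - Q) = B) :
    nucNorm (A + B) = nucNorm A + nucNorm B := by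
  refine le_antisymm (nucNorm_add_le A B) ?_
  obtain ⟨X, hX, hXA⟩ := exists_isContraction_trace_eq_nucNorm A
  obtain ⟨Y, hY, hYB⟩ := exists_isContraction_trace_eq_nucNorm B
  have hPt := (isStarProjection_iff_transpose.1 hP).2
  have hQt := (isStarProjection_iff_transpose.1 hQ).2
  have hAoff : (1 - P) * A * (1 - Q) = 0 := by
    rw [← hA, ← Matrix.mul_assoc, ← Matrix.mul_assoc, hP.one_sub_mul_self, Matrix.mul_assoc,
      hQ.mul_one_sub_self, Matrix.mul_zero]
  have hBoff : P * B * Q = 0 := by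
    rw [← hB, ← Matrix.mul_assoc, ← Matrix.mul_assoc, hP.mul_one_sub_self, Matrix.mul_assoc,
      hQ.one_sub_mul_self, Matrix.mul_zero]
  have htrace :
      trace ((P * X * Q + (1 - P) * Y * (1 - Q))ᵀ * (A + B)) = nucNorm A + nucNorm B := by
    have hPt' := (isStarProjection_iff_transpose.1 hP.one_sub).2
    have hQt' := (isStarProjection_iff_transpose.1 hQ.one_sub).2
    simp only [transpose_add, Matrix.add_mul, Matrix.mul_add, trace_add,
      trace_transpose_mul_compress hPt hQt, trace_transpose_mul_compress hPt' hQt', hA, hB, hAoff,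
      hBoff, Matrix.mul_zero, trace_zero, hXA, hYB, add_zero, zero_add]
  exact htrace ▸ trace_transpose_mul_le_nucNorm (hX.add_block hP hQ hY) (A + B)

end NuclearNorm

theorem nuclear_norm_decomposability_general {p m : ℕ}
    (Γ : Matrix (Fin p) (Fin m) ℝ)
    (P₁ : Matrix (Fin p) (Fin p) ℝ) (P₂ : Matrix (Fin m) (Fin m) ℝ)
    (hP₁sym : P₁ᵀ = P₁) (hP₁idem : P₁ * P₁ = P₁)
    (hP₁range : ∀ v : Fin p → ℝ, P₁.mulVec v = v ↔ v ∈ Set.range Γ.mulVec)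
    (hP₂sym : P₂ᵀ = P₂) (hP₂idem : P₂ * P₂ = P₂)
    (hP₂range : ∀ v : Fin m → ℝ, P₂.mulVec v = v ↔ v ∈ Set.range Γᵀ.mulVec) :
    ∀ Δ : Matrix (Fin p) (Fin m) ℝ,
      nucNorm Γ - nucNorm (Γ + Δ) ≤ nucNorm (Pproj P₁ P₂ Δ) - nucNorm (Pperp P₁ P₂ Δ) ∧
      nucNorm (Γ + Pperp P₁ P₂ Δ) = nucNorm Γ + nucNorm (Pperp P₁ P₂ Δ) := by
  intro Δ
  have hP₁ : IsStarProjection P₁ := isStarProjection_iff_transpose.2 ⟨hP₁idem, hP₁sym⟩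
  have hP₂ : IsStarProjection P₂ := isStarProjection_iff_transpose.2 ⟨hP₂idem, hP₂sym⟩
  have hΓ : P₁ * Γ * P₂ = Γ := by
    have hcol : P₁ * Γ = Γ := mul_eq_self_of_mulVec_eq_on_range fun v hv => (hP₁range v).2 hv
    have hrow : P₂ * Γᵀ = Γᵀ := mul_eq_self_of_mulVec_eq_on_range fun v hv => (hP₂range v).2 hv
    rw [hcol, ← transpose_transpose Γ, ← hP₂sym, ← transpose_mul, hrow]
  have hperp : (1 - P₁) * Pperp P₁ P₂ Δ * (1 - P₂) = Pperp P₁ P₂ Δ := by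
    rw [Pperp, ← Matrix.mul_assoc, ← Matrix.mul_assoc, hP₁.one_sub.isIdempotentElem.eq,
      Matrix.mul_assoc _ (1 - P₂), hP₂.one_sub.isIdempotentElem.eq]
  have hdecomp := nucNorm_add_eq_of_block hP₁ hP₂ hΓ hperp
  refine ⟨?_, hdecomp⟩
  have htriangle := nucNorm_sub_le (Γ + Δ) (Pproj P₁ P₂ Δ)
  rw [show Γ + Δ - Pproj P₁ P₂ Δ = Γ + Pperp P₁ P₂ Δ by rw [Pproj]; abel, hdecomp] at htriangle
  linarith

/-- decomposability of the nuclear norm: if rank Γ = r then for all Δ,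
‖Γ‖_* − ‖Γ+Δ‖_* ≤ ‖P_Γ(Δ)‖_* − ‖P_Γ^⊥(Δ)‖_*, and
‖Γ + P_Γ^⊥(Δ)‖_* = ‖Γ‖_* + ‖P_Γ^⊥(Δ)‖_*.  Here P₁, P₂ are the orthogonal projections
onto the column spaces of Γ and Γᵀ (spans of the left/right singular vectors of Γ). -/
theorem nuclear_norm_decomposability {p m : ℕ}
    (Γ : Matrix (Fin p) (Fin m) ℝ) (r : ℕ) (hr : Γ.rank = r)
    (P₁ : Matrix (Fin p) (Fin p) ℝ) (P₂ : Matrix (Fin m) (Fin m) ℝ)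
    (hP₁sym : P₁ᵀ = P₁) (hP₁idem : P₁ * P₁ = P₁)
    (hP₁range : ∀ v : Fin p → ℝ, P₁.mulVec v = v ↔ v ∈ Set.range Γ.mulVec)
    (hP₂sym : P₂ᵀ = P₂) (hP₂idem : P₂ * P₂ = P₂)
    (hP₂range : ∀ v : Fin m → ℝ, P₂.mulVec v = v ↔ v ∈ Set.range Γᵀ.mulVec) :
    ∀ Δ : Matrix (Fin p) (Fin m) ℝ,
      nucNorm Γ - nucNorm (Γ + Δ) ≤ nucNorm (Pproj P₁ P₂ Δ) - nucNorm (Pperp P₁ P₂ Δ) ∧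
      nucNorm (Γ + Pperp P₁ P₂ Δ) = nucNorm Γ + nucNorm (Pperp P₁ P₂ Δ) :=
  nuclear_norm_decomposability_general Γ P₁ P₂ hP₁sym hP₁idem hP₁range hP₂sym hP₂idem hP₂range
end
end
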